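/- arXiv:2507.13963 — 4 statements merged into one kernel-verified Lean document; each statement's English description precedes it below -/
import Mathlib

section
/- Say a set S ⊆ [n] separates an unordered pair {i,j} of distinct indices if exactly one of i,j lies in S, and a pair (S_1,S_2) of subsets separates {i,j} if S_1 or S_2 does. There exists a collection F ⊆ 2^{[n]} × 2^{[n]} of size O(log n) such that for every pair {i,j} ∈ C([n],2), at least a 2/3-fraction of the elements of F separate {i,j}. -/
/-!
Choose `t = 3u` pairs `(S₁, S₂)` independently and uniformly at random. A fixed pair `{i, j}`
with `i ≠ j` is missed by each of them with probability `1/4`, so the number `X` of misses has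
`𝔼[2^X] = (5/4)^t`, and by Markov's inequality `ℙ(X > u) ≤ (5/4)^(3u) / 2^(u+1) = (125/128)^u / 2`.
For `u = 100 (⌊log₂ n⌋ + 1)` we have `n² (125/128)^u ≤ 1`, so by a union bound at most half of
the samples leave some `{i, j}` unseparated by more than `u` of their `t` pairs. By the birthday
bound fewer than half of the samples contain a repetition once `2t² < 4ⁿ`, i.e. for `n ≥ 16`;
a remaining sample is the required family of size `3u = O(log n)`. For `n < 16` the family of
all `4ⁿ` pairs works, as three quarters of them separate any `{i, j}`.
Probabilities are encoded as counts of samples, i.e. of sequences `Fin t → α`.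
-/

open Finset Classical

def SepSet {n : ℕ} (S : Finset (Fin n)) (i j : Fin n) : Prop :=
  (i ∈ S ∧ j ∉ S) ∨ (j ∈ S ∧ i ∉ S)

def SepPair {n : ℕ} (p : Finset (Fin n) × Finset (Fin n)) (i j : Fin n) : Prop :=
  SepSet p.1 i j ∨ SepSet p.2 i j

theorem pow_succ_le_mul_descFactorial_add (N k : ℕ) :
    N ^ (k + 1) ≤ N * N.descFactorial k + k ^ 2 * N ^ k := by
  induction k with
  | zero => simp
  | succ k ih =>
    have hD : N.descFactorial k ≤ N ^ k := Nat.descFactorial_le_pow N k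
    have hsplit : N * N ≤ N * (N - k) + N * k := by
      rw [← mul_add]; exact Nat.mul_le_mul_left N (by omega)
    rw [Nat.descFactorial_succ]
    calc N ^ (k + 1 + 1) = N * N ^ (k + 1) := by ring
      _ ≤ N * (N * N.descFactorial k + k ^ 2 * N ^ k) := Nat.mul_le_mul_left N ih
      _ = N * N * N.descFactorial k + k ^ 2 * N ^ (k + 1) := by ring
      _ ≤ (N * (N - k) + N * k) * N.descFactorial k + k ^ 2 * N ^ (k + 1) := by gcongr
      _ = N * ((N - k) * N.descFactorial k) + k * (N * N.descFactorial k)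
          + k ^ 2 * N ^ (k + 1) := by ring
      _ ≤ N * ((N - k) * N.descFactorial k) + k * N ^ (k + 1) + k ^ 2 * N ^ (k + 1) := by
        rw [pow_succ' N k]; gcongr
      _ ≤ N * ((N - k) * N.descFactorial k) + (k + 1) ^ 2 * N ^ (k + 1) := by
        rw [add_assoc, ← add_mul]; gcongr; nlinarith

theorem pow_lt_two_mul_descFactorial {N k : ℕ} (h : 2 * k ^ 2 < N) :
    N ^ k < 2 * N.descFactorial k := by
  have := pow_succ_le_mul_descFactorial_add N k
  rw [pow_succ] at this
  have hN : 0 < N ^ k := pow_pos (by omega) k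
  nlinarith

section Sampling

variable {α : Type*} [Fintype α] {t : ℕ}

theorem sum_two_pow_card_filter (p : α → Prop) :
    ∑ ω : Fin t → α, 2 ^ #{a | p (ω a)} = (Fintype.card α + #{x | p x}) ^ t := by
  have hweight : ∀ ω : Fin t → α, 2 ^ #{a | p (ω a)} = ∏ a, if p (ω a) then 2 else 1 := by
    intro ω
    rw [prod_ite, prod_const, prod_const_one, mul_one]
  have hsum : ∑ x, (if p x then 2 else 1) = Fintype.card α + #{x | p x} := by
    rw [sum_ite, sum_const, sum_const, smul_eq_mul, smul_eq_mul, mul_one, ← card_univ,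
      ← card_filter_add_card_filter_not (s := univ) (p := p)]
    ring
  simp_rw [hweight, ← hsum, Fintype.sum_pow]

theorem two_pow_succ_mul_card_filter_lt_le (p : α → Prop) (u : ℕ) :
    2 ^ (u + 1) * #{ω : Fin t → α | u < #{a | p (ω a)}} ≤ (Fintype.card α + #{x | p x}) ^ t := by
  rw [← sum_two_pow_card_filter, mul_comm, ← smul_eq_mul]
  refine (card_nsmul_le_sum _ _ _ fun ω hω => ?_).trans (sum_le_sum_of_subset (filter_subset _ _))
  exact Nat.pow_le_pow_right two_pos (mem_filter.mp hω).2

theorem two_pow_succ_mul_four_pow_mul_card_filter_lt_le {p : α → Prop}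
    (hp : 4 * #{x | p x} ≤ Fintype.card α) (u : ℕ) :
    2 ^ (u + 1) * 4 ^ t * #{ω : Fin t → α | u < #{a | p (ω a)}} ≤ 5 ^ t * Fintype.card α ^ t := by
  calc 2 ^ (u + 1) * 4 ^ t * #{ω : Fin t → α | u < #{a | p (ω a)}}
      = 4 ^ t * (2 ^ (u + 1) * #{ω : Fin t → α | u < #{a | p (ω a)}}) := by ring
    _ ≤ 4 ^ t * (Fintype.card α + #{x | p x}) ^ t := by
      gcongr; exact two_pow_succ_mul_card_filter_lt_le p u
    _ = (4 * Fintype.card α + 4 * #{x | p x}) ^ t := by rw [← mul_pow, mul_add]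
    _ ≤ 5 ^ t * Fintype.card α ^ t := by rw [← mul_pow]; gcongr; omega

theorem two_mul_card_filter_not_injective_lt (h : 2 * t ^ 2 < Fintype.card α) :
    2 * #{ω : Fin t → α | ¬ Function.Injective ω} < Fintype.card α ^ t := by
  have hinj : #{ω : Fin t → α | Function.Injective ω} = (Fintype.card α).descFactorial t := by
    rw [← Fintype.card_subtype, Fintype.card_congr (Equiv.subtypeInjectiveEquivEmbedding _ _),
      Fintype.card_embedding_eq, Fintype.card_fin]
  have hsplit := card_filter_add_card_filter_not (s := (univ : Finset (Fin t → α)))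
    (p := Function.Injective)
  rw [card_univ, Fintype.card_fun, Fintype.card_fin, hinj] at hsplit
  have := pow_lt_two_mul_descFactorial h
  omega

theorem exists_finset_card_eq_forall_card_filter_le {ι : Type*} [Fintype ι] {p : ι → α → Prop}
    (hp : ∀ i, 4 * #{x | p i x} ≤ Fintype.card α) {u : ℕ}
    (hι : Fintype.card ι * 125 ^ u ≤ 128 ^ u) (hα : 2 * (3 * u) ^ 2 < Fintype.card α) :
    ∃ s : Finset α, #s = 3 * u ∧ ∀ i, #{x ∈ s | p i x} ≤ u := by
  let Bad (i : ι) : Finset (Fin (3 * u) → α) := {ω | u < #{a | p i (ω a)}}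
  have hBad : 2 * ∑ i, #(Bad i) ≤ Fintype.card α ^ (3 * u) := by
    have hsum : 2 ^ (u + 1) * 4 ^ (3 * u) * ∑ i, #(Bad i) ≤ 128 ^ u * Fintype.card α ^ (3 * u) :=
      calc 2 ^ (u + 1) * 4 ^ (3 * u) * ∑ i, #(Bad i)
          ≤ ∑ _i : ι, 5 ^ (3 * u) * Fintype.card α ^ (3 * u) := by
            rw [mul_sum]
            exact sum_le_sum fun i _ => two_pow_succ_mul_four_pow_mul_card_filter_lt_le (hp i) u
        _ = Fintype.card ι * 125 ^ u * Fintype.card α ^ (3 * u) := by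
            rw [sum_const, card_univ, smul_eq_mul, pow_mul]; ring
        _ ≤ 128 ^ u * Fintype.card α ^ (3 * u) := by gcongr
    have h128 : (128 : ℕ) ^ u = 2 ^ u * 4 ^ (3 * u) := by rw [pow_mul, ← mul_pow]; norm_num
    rw [h128] at hsum
    have hpos : 0 < 2 ^ u * 4 ^ (3 * u) := by positivity
    exact le_of_mul_le_mul_left (by rw [pow_succ] at hsum; linarith) hpos
  obtain ⟨ω, hinj, hgood⟩ : ∃ ω : Fin (3 * u) → α, Function.Injective ω ∧ ∀ i, ω ∉ Bad i := by
    by_contra! hcon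
    have hcover : (univ : Finset (Fin (3 * u) → α)) ⊆
        ({ω | ¬ Function.Injective ω} : Finset _) ∪ univ.biUnion Bad := by
      intro ω _
      by_cases hω : Function.Injective ω
      · obtain ⟨i, hi⟩ := hcon ω hω
        exact mem_union_right _ (mem_biUnion.mpr ⟨i, mem_univ i, hi⟩)
      · exact mem_union_left _ (mem_filter.mpr ⟨mem_univ ω, hω⟩)
    have hcard := (card_le_card hcover).trans ((card_union_le _ _).trans
      (Nat.add_le_add_left card_biUnion_le _))
    rw [card_univ, Fintype.card_fun, Fintype.card_fin] at hcard
    have := two_mul_card_filter_not_injective_lt (t := 3 * u) hα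
    omega
  refine ⟨univ.image ω, by rw [card_image_of_injective _ hinj, card_univ, Fintype.card_fin], ?_⟩
  intro i
  rw [filter_image, card_image_of_injective _ hinj]
  simpa [Bad] using hgood i

end Sampling

section Separation

variable {n : ℕ} {i j : Fin n}

theorem sepSet_symmDiff_singleton_iff (hij : i ≠ j) (S : Finset (Fin n)) :
    SepSet (symmDiff S {j}) i j ↔ ¬ SepSet S i j := by
  simp only [SepSet, mem_symmDiff, mem_singleton, hij]
  tauto

theorem two_mul_card_filter_not_sepSet (hij : i ≠ j) :
    2 * #{S : Finset (Fin n) | ¬ SepSet S i j} = Fintype.card (Finset (Fin n)) := by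
  have hswap : #{S : Finset (Fin n) | ¬ SepSet S i j} = #{S : Finset (Fin n) | SepSet S i j} :=
    card_equiv ((symmDiff_left_involutive {j}).toPerm _) fun S => by
      simp [sepSet_symmDiff_singleton_iff hij]
  rw [two_mul, ← card_univ]
  nth_rw 1 [hswap]
  exact card_filter_add_card_filter_not _

theorem four_mul_card_filter_not_sepPair (hij : i ≠ j) :
    4 * #{p : Finset (Fin n) × Finset (Fin n) | ¬ SepPair p i j} =
      Fintype.card (Finset (Fin n) × Finset (Fin n)) := by
  have hprod : #{p : Finset (Fin n) × Finset (Fin n) | ¬ SepPair p i j} =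
      #((univ.filter fun S => ¬ SepSet S i j) ×ˢ (univ.filter fun S => ¬ SepSet S i j)) := by
    congr 1
    ext p
    simp only [SepPair, not_or, mem_filter, mem_univ, true_and, mem_product]
  rw [hprod, card_product, Fintype.card_prod, ← two_mul_card_filter_not_sepSet hij]
  ring

theorem two_mul_card_le_three_mul_card_filter_sepPair (hij : i ≠ j) :
    2 * Fintype.card (Finset (Fin n) × Finset (Fin n)) ≤
      3 * #{p : Finset (Fin n) × Finset (Fin n) | SepPair p i j} := by
  have hsplit := card_filter_add_card_filter_not (s := univ) (fun p => SepPair p i j)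
  rw [card_univ] at hsplit
  have := four_mul_card_filter_not_sepPair hij
  omega

theorem exists_sepPair_family {u : ℕ} (hn : n ^ 2 * 125 ^ u ≤ 128 ^ u)
    (hu : 2 * (3 * u) ^ 2 < 4 ^ n) :
    ∃ F : Finset (Finset (Fin n) × Finset (Fin n)), #F = 3 * u ∧
      ∀ i j : Fin n, i ≠ j → 2 * #F ≤ 3 * #(F.filter fun p => SepPair p i j) := by
  have hcard : Fintype.card (Finset (Fin n) × Finset (Fin n)) = 4 ^ n := by
    simp [Fintype.card_finset, ← mul_pow]
  obtain ⟨F, hF, hsep⟩ := exists_finset_card_eq_forall_card_filter_le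
    (p := fun (q : Fin n × Fin n) p => q.1 ≠ q.2 ∧ ¬ SepPair p q.1 q.2)
    (fun q => by
      by_cases hq : q.1 = q.2
      · simp [hq]
      · simpa [hq] using (four_mul_card_filter_not_sepPair hq).le)
    (by rwa [Fintype.card_prod, Fintype.card_fin, ← sq]) (by rwa [hcard])
  refine ⟨F, hF, fun i j hij => ?_⟩
  have hsplit := card_filter_add_card_filter_not (s := F) (fun p => SepPair p i j)
  have := hsep (i, j)
  simp only [hij, ne_eq, not_false_eq_true, true_and] at this
  omega

theorem exists_sepPair_family_of_lt (hn : n < 16) :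
    ∃ F : Finset (Finset (Fin n) × Finset (Fin n)), F.Nonempty ∧ #F ≤ 4 ^ 15 ∧
      ∀ i j : Fin n, i ≠ j → 2 * #F ≤ 3 * #(F.filter fun p => SepPair p i j) := by
  refine ⟨univ, univ_nonempty, ?_, fun i j hij => ?_⟩
  · rw [card_univ, Fintype.card_prod, Fintype.card_finset, Fintype.card_fin, ← mul_pow]
    exact Nat.pow_le_pow_right (by norm_num) (by omega)
  · simpa using two_mul_card_le_three_mul_card_filter_sepPair hij

end Separation

theorem sq_mul_125_pow_le_128_pow (n : ℕ) :
    n ^ 2 * 125 ^ (100 * (Nat.log 2 n + 1)) ≤ 128 ^ (100 * (Nat.log 2 n + 1)) := by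
  have hn : n ^ 2 ≤ 4 ^ (Nat.log 2 n + 1) := by
    rw [show (4 : ℕ) = 2 ^ 2 by rfl, ← pow_mul, mul_comm, pow_mul]
    exact Nat.pow_le_pow_left (Nat.lt_pow_succ_log_self one_lt_two n).le 2
  rw [pow_mul, pow_mul]
  calc n ^ 2 * (125 ^ 100) ^ (Nat.log 2 n + 1)
      ≤ 4 ^ (Nat.log 2 n + 1) * (125 ^ 100) ^ (Nat.log 2 n + 1) := by gcongr
    _ = (4 * 125 ^ 100) ^ (Nat.log 2 n + 1) := by rw [mul_pow]
    _ ≤ (128 ^ 100) ^ (Nat.log 2 n + 1) := by gcongr; norm_num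

theorem mul_sq_lt_four_pow {n : ℕ} (hn : 16 ≤ n) : 180000 * n ^ 2 < 4 ^ n := by
  induction n, hn using Nat.le_induction with
  | base => norm_num
  | succ m hm ih =>
    have : 180000 * (m + 1) ^ 2 ≤ 2 * (180000 * m ^ 2) := by nlinarith
    rw [pow_succ 4 m]
    omega

theorem natLog_two_le_two_mul_log (n : ℕ) : (Nat.log 2 n : ℝ) ≤ 2 * Real.log n := by
  have hlog2 : 1 / 2 < Real.log 2 := by linarith [Real.log_two_gt_d9]
  have hlogn : 0 ≤ Real.log n := Real.log_natCast_nonneg n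
  calc (Nat.log 2 n : ℝ) ≤ Real.logb 2 n := by exact_mod_cast Real.natLog_le_logb n 2
    _ = Real.log n / Real.log 2 := rfl
    _ ≤ 2 * Real.log n := by
      rw [div_le_iff₀ (by linarith)]; nlinarith

/-- There is a collection `F` of pairs of subsets of `[n]` of size `O(log n)` such that every
pair `{i, j}` of distinct indices is separated by at least a `2/3`-fraction of the
elements of `F`. -/
theorem stmt6 :
    ∃ C : ℝ, 0 < C ∧ ∀ n : ℕ, 2 ≤ n →
      ∃ F : Finset (Finset (Fin n) × Finset (Fin n)),
        F.Nonempty ∧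
        (F.card : ℝ) ≤ C * Real.log n ∧
        ∀ i j : Fin n, i ≠ j →
          (2 / 3 : ℝ) * F.card ≤ ((F.filter (fun p => SepPair p i j)).card : ℝ) := by
  refine ⟨4 ^ 16, by norm_num, fun n hn => ?_⟩
  have hlog : 1 / 2 < Real.log n := by
    linarith [Real.log_two_gt_d9, Real.log_le_log two_pos (Nat.ofNat_le_cast.mpr hn)]
  suffices ∃ F : Finset (Finset (Fin n) × Finset (Fin n)), F.Nonempty ∧
      (#F : ℝ) ≤ 4 ^ 16 * Real.log n ∧
      ∀ i j : Fin n, i ≠ j → 2 * #F ≤ 3 * #(F.filter fun p => SepPair p i j) by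
    obtain ⟨F, hne, hcard, hsep⟩ := this
    refine ⟨F, hne, hcard, fun i j hij => ?_⟩
    have := (Nat.cast_le (α := ℝ)).mpr (hsep i j hij)
    push_cast at this
    linarith
  rcases lt_or_ge n 16 with hsmall | hbig
  · obtain ⟨F, hne, hcard, hsep⟩ := exists_sepPair_family_of_lt hsmall
    refine ⟨F, hne, ?_, hsep⟩
    have := (Nat.cast_le (α := ℝ)).mpr hcard
    push_cast at this
    nlinarith
  · set k := Nat.log 2 n
    have hk : 1 ≤ k := Nat.log_pos one_lt_two hn
    obtain ⟨F, hcard, hsep⟩ := exists_sepPair_family (sq_mul_125_pow_le_128_pow n)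
      (by nlinarith [mul_sq_lt_four_pow hbig, Nat.log_lt_self 2 (by omega : n ≠ 0)])
    refine ⟨F, card_pos.mp (by omega), ?_, hsep⟩
    have hlogk := natLog_two_le_two_mul_log n
    rw [hcard]
    push_cast
    nlinarith
end

section
/- The threshold function Thr^n_{n-1} has approximate sparsity O(log n): there exists a multilinear real polynomial g of sparsity O(log n) such that |g(x) - Thr^n_{n-1}(x)| ≤ 1/3 for all x ∈ {0,1}^n. -/
open Finset Classical

/-- Evaluation of a multilinear polynomial (given by its coefficients) at a Boolean point. -/
noncomputable def mlEval {n : ℕ} (a : Finset (Fin n) → ℝ) (x : Fin n → Bool) : ℝ :=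
  ∑ S : Finset (Fin n), a S * ∏ i ∈ S, (if x i then (1 : ℝ) else 0)

private lemma mono_eq {n : ℕ} (S : Finset (Fin n)) (x : Fin n → Bool) :
    (∏ i ∈ S, (if x i then (1:ℝ) else 0)) = if ∀ i ∈ S, x i = true then 1 else 0 := by
  by_cases h : ∀ i ∈ S, x i = true
  · rw [if_pos h]
    exact Finset.prod_eq_one fun i hi => by rw [h i hi]; simp
  · rw [if_neg h]
    push_neg at h
    obtain ⟨i, hi, hxi⟩ := h
    exact Finset.prod_eq_zero hi (if_neg hxi)


private lemma exists_good (n : ℕ) (hn : 2 ≤ n) :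
    ∃ g : Fin (48 * Nat.log 2 n) → Fin n → Bool × Bool × Bool,
      ∀ i j : Fin n, i ≠ j →
        3 * (Finset.univ.filter (fun t => g t i = g t j)).card < 48 * Nat.log 2 n := by
  classical
  set L := Nat.log 2 n with hLdef
  have hL : 1 ≤ L := Nat.log_pos (by norm_num) hn
  have hnlt : n < 2 ^ (L + 1) := Nat.lt_pow_succ_log_self (by norm_num) n
  set M := 48 * L with hMdef
  -- per-pair moment bound
  have key : ∀ i j : Fin n, i ≠ j →
      (∑ g : Fin M → Fin n → Bool × Bool × Bool,
        4 ^ (Finset.univ.filter (fun t => g t i = g t j)).card)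
        ≤ (11 * 8 ^ (n - 1)) ^ M := by
    intro i j hij
    have h1 : ∀ g : Fin M → Fin n → Bool × Bool × Bool,
        (4:ℕ) ^ (Finset.univ.filter (fun t => g t i = g t j)).card
          = ∏ t : Fin M, (if g t i = g t j then 4 else 1) := by
      intro g
      rw [Finset.prod_ite, Finset.prod_const, Finset.prod_const, one_pow, mul_one]
    have h2 : (∑ g : Fin M → Fin n → Bool × Bool × Bool,
          ∏ t : Fin M, (if g t i = g t j then (4:ℕ) else 1))
        = (∑ k : Fin n → Bool × Bool × Bool, if k i = k j then (4:ℕ) else 1) ^ M := by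
      rw [← Fintype.piFinset_univ]
      have h := Finset.prod_univ_sum (κ := fun _ : Fin M => Fin n → Bool × Bool × Bool)
          (fun _ => (univ : Finset (Fin n → Bool × Bool × Bool)))
          (fun _ k => if k i = k j then (4:ℕ) else 1)
      rw [← h, Finset.prod_const, Finset.card_univ, Fintype.card_fin]
    have h3 : (∑ k : Fin n → Bool × Bool × Bool, if k i = k j then (4:ℕ) else 1)
        ≤ 11 * 8 ^ (n - 1) := by
      have hsplit : (∑ k : Fin n → Bool × Bool × Bool, if k i = k j then (4:ℕ) else 1)
          = 3 * (univ.filter (fun k : Fin n → Bool × Bool × Bool => k i = k j)).card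
            + ((univ.filter (fun k : Fin n → Bool × Bool × Bool => k i = k j)).card
               + (univ.filter (fun k : Fin n → Bool × Bool × Bool => ¬ k i = k j)).card) := by
        rw [Finset.sum_ite, Finset.sum_const, Finset.sum_const]
        simp only [smul_eq_mul, mul_one]
        ring
      have hfull : (univ.filter (fun k : Fin n → Bool × Bool × Bool => k i = k j)).card
            + (univ.filter (fun k : Fin n → Bool × Bool × Bool => ¬ k i = k j)).card
          = 8 ^ n := by
        rw [Finset.card_filter_add_card_filter_not, Finset.card_univ]
        simp [Fintype.card_fun]
      have hcT : (univ.filter (fun k : Fin n → Bool × Bool × Bool => k i = k j)).card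
          ≤ 8 ^ (n - 1) := by
        have hinj : ∀ k1 ∈ univ.filter (fun k : Fin n → Bool × Bool × Bool => k i = k j),
            ∀ k2 ∈ univ.filter (fun k : Fin n → Bool × Bool × Bool => k i = k j),
            (fun s : {a : Fin n // a ≠ j} => k1 s.1) = (fun s : {a : Fin n // a ≠ j} => k2 s.1)
            → k1 = k2 := by
          intro k1 h1 k2 h2 hee
          simp only [Finset.mem_filter] at h1 h2
          funext a
          by_cases ha : a = j
          · subst ha
            have e1 : k1 i = k2 i := congrFun hee ⟨i, hij⟩
            rw [← h1.2, ← h2.2, e1]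
          · exact congrFun hee ⟨a, ha⟩
        have := Finset.card_le_card_of_injOn
          (f := fun (k : Fin n → Bool × Bool × Bool) (s : {a : Fin n // a ≠ j}) => k s.1)
          (t := (univ : Finset ({a : Fin n // a ≠ j} → Bool × Bool × Bool)))
          (fun k _ => Finset.mem_univ _) hinj
        refine this.trans ?_
        rw [Finset.card_univ, Fintype.card_fun]
        have hcs : Fintype.card {a : Fin n // a ≠ j} = n - 1 := by
          rw [Fintype.card_subtype_compl, Fintype.card_fin, Fintype.card_subtype_eq]
        rw [hcs]
        simp
      have h8 : (8:ℕ) ^ n = 8 * 8 ^ (n - 1) := by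
        conv_lhs => rw [show n = n - 1 + 1 from
          (Nat.succ_pred_eq_of_pos (lt_of_lt_of_le (by norm_num) hn)).symm]
        rw [pow_succ]; ring
      rw [hsplit, hfull, h8]
      have : 3 * (univ.filter (fun k : Fin n → Bool × Bool × Bool => k i = k j)).card
          ≤ 3 * 8 ^ (n - 1) := Nat.mul_le_mul_left _ hcT
      calc 3 * (univ.filter (fun k : Fin n → Bool × Bool × Bool => k i = k j)).card
            + 8 * 8 ^ (n - 1) ≤ 3 * 8 ^ (n - 1) + 8 * 8 ^ (n - 1) :=
            Nat.add_le_add_right this _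
        _ = 11 * 8 ^ (n - 1) := by ring
    calc (∑ g : Fin M → Fin n → Bool × Bool × Bool,
            4 ^ (Finset.univ.filter (fun t => g t i = g t j)).card)
        = (∑ k : Fin n → Bool × Bool × Bool, if k i = k j then (4:ℕ) else 1) ^ M := by
          rw [Finset.sum_congr rfl (fun g _ => h1 g), h2]
      _ ≤ (11 * 8 ^ (n - 1)) ^ M := Nat.pow_le_pow_left h3 M
  -- total bound over all pairs
  have total : (∑ g : Fin M → Fin n → Bool × Bool × Bool,
        ∑ p ∈ (univ : Finset (Fin n)).offDiag,
          4 ^ (Finset.univ.filter (fun t => g t p.1 = g t p.2)).card)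
      ≤ n * n * (11 * 8 ^ (n - 1)) ^ M := by
    rw [Finset.sum_comm]
    calc (∑ p ∈ (univ : Finset (Fin n)).offDiag,
            ∑ g : Fin M → Fin n → Bool × Bool × Bool,
              4 ^ (Finset.univ.filter (fun t => g t p.1 = g t p.2)).card)
        ≤ ∑ p ∈ (univ : Finset (Fin n)).offDiag, (11 * 8 ^ (n - 1)) ^ M := by
          refine Finset.sum_le_sum ?_
          intro p hp
          rw [Finset.mem_offDiag] at hp
          exact key p.1 p.2 hp.2.2
      _ = ((univ : Finset (Fin n)).offDiag.card) * (11 * 8 ^ (n - 1)) ^ M := by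
          rw [Finset.sum_const, smul_eq_mul]
      _ ≤ n * n * (11 * 8 ^ (n - 1)) ^ M := by
          have : ((univ : Finset (Fin n)).offDiag.card) ≤ n * n := by
            rw [Finset.offDiag_card, Finset.card_univ, Fintype.card_fin]
            exact Nat.sub_le _ _
          exact Nat.mul_le_mul_right _ this
  -- numeric bound
  have core : n * n * 11 ^ M < 8 ^ M * 4 ^ (16 * L) := by
    have c1 : n * n < 4 ^ (L + 1) := by
      calc n * n < 2 ^ (L + 1) * 2 ^ (L + 1) :=
            Nat.mul_lt_mul_of_lt_of_le hnlt (le_of_lt hnlt) (by positivity)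
        _ = 4 ^ (L + 1) := by rw [← mul_pow]; norm_num
    have c2 : (4:ℕ) ^ (L + 1) * 11 ^ M ≤ 8 ^ M * 4 ^ (16 * L) := by
      have h11 : (11:ℕ) ^ M = (11 ^ 48) ^ L := by rw [hMdef, pow_mul]
      have h8 : (8:ℕ) ^ M * 4 ^ (16 * L) = (2 ^ 176) ^ L := by
        rw [hMdef, show (8:ℕ) = 2 ^ 3 from rfl, show (4:ℕ) = 2 ^ 2 from rfl,
          ← pow_mul, ← pow_mul, ← pow_add,
          show 3 * (48 * L) + 2 * (16 * L) = 176 * L from by ring, pow_mul]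
      rw [h11, h8, pow_succ]
      calc 4 ^ L * 4 * (11 ^ 48) ^ L = 4 * (4 * 11 ^ 48) ^ L := by
            rw [mul_pow]; ring
        _ ≤ 4 ^ L * (2 ^ 174) ^ L := by
            have e1 : (4 * 11 ^ 48 : ℕ) ≤ 2 ^ 172 := by norm_num
            have e2 : (4:ℕ) * (2 ^ 172) ^ L ≤ 4 ^ L * (2 ^ 172) ^ L := by
              have : (4:ℕ) ≤ 4 ^ L := by
                calc (4:ℕ) = 4 ^ 1 := by norm_num
                  _ ≤ 4 ^ L := Nat.pow_le_pow_right (by norm_num) hL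
              exact Nat.mul_le_mul_right _ this
            calc 4 * (4 * 11 ^ 48) ^ L ≤ 4 * (2 ^ 172) ^ L :=
                  Nat.mul_le_mul_left _ (Nat.pow_le_pow_left e1 L)
              _ ≤ 4 ^ L * (2 ^ 172) ^ L := e2
              _ ≤ 4 ^ L * (2 ^ 174) ^ L := by
                  refine Nat.mul_le_mul_left _ (Nat.pow_le_pow_left (by norm_num) L)
        _ ≤ (2 ^ 176) ^ L := by
            rw [show (4:ℕ) = 2 ^ 2 from rfl, ← mul_pow]
            refine Nat.pow_le_pow_left (by norm_num) L

    calc n * n * 11 ^ M < 4 ^ (L + 1) * 11 ^ M :=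
          mul_lt_mul_of_pos_right c1 (by positivity)
      _ ≤ 8 ^ M * 4 ^ (16 * L) := c2
  have num : n * n * (11 * 8 ^ (n - 1)) ^ M
      < Fintype.card (Fin M → Fin n → Bool × Bool × Bool) * 4 ^ (16 * L) := by
    have hcard : Fintype.card (Fin M → Fin n → Bool × Bool × Bool) = (8 ^ n) ^ M := by
      rw [Fintype.card_fun, Fintype.card_fun]
      simp
    rw [hcard]
    have h8 : (8:ℕ) ^ n = 8 * 8 ^ (n - 1) := by
      conv_lhs => rw [show n = n - 1 + 1 from
        (Nat.succ_pred_eq_of_pos (lt_of_lt_of_le (by norm_num) hn)).symm]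
      rw [pow_succ]; ring
    calc n * n * (11 * 8 ^ (n - 1)) ^ M
        = (n * n * 11 ^ M) * (8 ^ (n - 1)) ^ M := by rw [mul_pow]; ring
      _ < (8 ^ M * 4 ^ (16 * L)) * (8 ^ (n - 1)) ^ M :=
          mul_lt_mul_of_pos_right core (by positivity)
      _ = (8 ^ n) ^ M * 4 ^ (16 * L) := by rw [h8, mul_pow]; ring
  -- extract a good g
  have hex : ∃ g : Fin M → Fin n → Bool × Bool × Bool,
      (∑ p ∈ (univ : Finset (Fin n)).offDiag,
        4 ^ (Finset.univ.filter (fun t => g t p.1 = g t p.2)).card) < 4 ^ (16 * L) := by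
    by_contra hc
    push_neg at hc
    have hlow : Fintype.card (Fin M → Fin n → Bool × Bool × Bool) * 4 ^ (16 * L)
        ≤ ∑ g : Fin M → Fin n → Bool × Bool × Bool,
            ∑ p ∈ (univ : Finset (Fin n)).offDiag,
              4 ^ (Finset.univ.filter (fun t => g t p.1 = g t p.2)).card := by
      rw [← Finset.card_univ, ← smul_eq_mul]
      exact Finset.card_nsmul_le_sum _ _ _ (fun g _ => hc g)
    exact absurd (hlow.trans total) (not_le.mpr num)
  obtain ⟨g, hgood⟩ := hex
  refine ⟨g, ?_⟩
  intro i j hij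
  have hmem : (i, j) ∈ (univ : Finset (Fin n)).offDiag := by
    rw [Finset.mem_offDiag]; exact ⟨Finset.mem_univ _, Finset.mem_univ _, hij⟩
  have hle : 4 ^ (Finset.univ.filter (fun t => g t i = g t j)).card
      ≤ ∑ p ∈ (univ : Finset (Fin n)).offDiag,
          4 ^ (Finset.univ.filter (fun t => g t p.1 = g t p.2)).card :=
    Finset.single_le_sum
      (f := fun p : Fin n × Fin n => 4 ^ (Finset.univ.filter (fun t => g t p.1 = g t p.2)).card)
      (fun p _ => Nat.zero_le _) hmem
  have hlt : 4 ^ (Finset.univ.filter (fun t => g t i = g t j)).card < 4 ^ (16 * L) :=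
    lt_of_le_of_lt hle hgood
  have hD : (Finset.univ.filter (fun t => g t i = g t j)).card < 16 * L :=
    (Nat.pow_lt_pow_iff_right (by norm_num)).mp hlt
  calc 3 * (Finset.univ.filter (fun t => g t i = g t j)).card
      < 3 * (16 * L) := by
        exact mul_lt_mul_of_pos_left hD (by norm_num)
    _ = 48 * L := by ring

/-- The threshold function `Thr^n_{n-1}` has `1/3`-approximate sparsity `O(log n)`:
there is a multilinear real polynomial with `O(log n)` nonzero coefficients that is within
`1/3` of `Thr^n_{n-1}` at every Boolean point. -/
theorem stmt8 :
    ∃ C : ℝ, 0 < C ∧ ∀ n : ℕ, 2 ≤ n →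
      ∃ a : Finset (Fin n) → ℝ,
        (((Finset.univ : Finset (Finset (Fin n))).filter (fun S => a S ≠ 0)).card : ℝ)
            ≤ C * Real.log n ∧
        ∀ x : Fin n → Bool,
          |mlEval a x -
            (if n - 1 ≤ ((Finset.univ : Finset (Fin n)).filter (fun i => x i = true)).card
             then 1 else 0)| ≤ 1 / 3 := by
  classical
  refine ⟨1000, by norm_num, ?_⟩
  intro n hn
  set L := Nat.log 2 n with hLdef
  have hL : 1 ≤ L := Nat.log_pos (by norm_num) hn
  set M := 48 * L with hMdef
  have hMpos : 0 < M := by omega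
  obtain ⟨g, hg⟩ := exists_good n hn
  set U : Fin M → Bool × Bool × Bool → Finset (Fin n) :=
    fun t v => Finset.univ.filter (fun i => g t i ≠ v) with hU
  set b : Fin M → Finset (Fin n) → ℝ :=
    fun t T => (∑ v : Bool × Bool × Bool, if U t v = T then (1:ℝ) else 0)
      - (if T = Finset.univ then 7 else 0) with hb
  refine ⟨fun T => (M:ℝ)⁻¹ * ∑ t : Fin M, b t T, ?_, ?_⟩
  · -- sparsity
    have hsub : ((Finset.univ : Finset (Finset (Fin n))).filter
          (fun S => (M:ℝ)⁻¹ * ∑ t : Fin M, b t S ≠ 0))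
        ⊆ insert Finset.univ
            ((univ : Finset (Fin M × (Bool × Bool × Bool))).image fun p => U p.1 p.2) := by
      intro T hT
      rw [Finset.mem_filter] at hT
      by_contra hTn
      rw [Finset.mem_insert] at hTn
      push_neg at hTn
      obtain ⟨hT1, hT2⟩ := hTn
      apply hT.2
      have hz : ∀ t : Fin M, b t T = 0 := by
        intro t
        rw [hb]
        simp only
        rw [if_neg hT1, sub_zero]
        refine Finset.sum_eq_zero fun v _ => ?_
        rw [if_neg]
        intro hUv
        exact hT2 (Finset.mem_image.mpr ⟨(t, v), Finset.mem_univ _, hUv⟩)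
      rw [Finset.sum_congr rfl fun t _ => hz t, Finset.sum_const, smul_zero, mul_zero]
    have hcard : ((Finset.univ : Finset (Finset (Fin n))).filter
          (fun S => (M:ℝ)⁻¹ * ∑ t : Fin M, b t S ≠ 0)).card ≤ 8 * M + 1 := by
      refine (Finset.card_le_card hsub).trans ?_
      refine (Finset.card_insert_le _ _).trans ?_
      have h1 := Finset.card_image_le
        (s := (univ : Finset (Fin M × (Bool × Bool × Bool)))) (f := fun p => U p.1 p.2)
      have hcu : (univ : Finset (Fin M × (Bool × Bool × Bool))).card = 8 * M := by
        rw [Finset.card_univ, Fintype.card_prod, Fintype.card_fin]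
        simp [mul_comm]
      omega
    have hlog : (L : ℝ) ≤ Real.log n / Real.log 2 := by
      have h := Real.natLog_le_logb n 2
      rw [Real.logb] at h
      norm_num at h
      exact_mod_cast h
    have hlog2 : (0.6931471803 : ℝ) < Real.log 2 := Real.log_two_gt_d9
    have hlogn : (0:ℝ) ≤ Real.log n := by
      refine Real.log_nonneg ?_
      have : (2:ℝ) ≤ (n:ℝ) := by exact_mod_cast hn
      linarith
    calc (((Finset.univ : Finset (Finset (Fin n))).filter
          (fun S => (M:ℝ)⁻¹ * ∑ t : Fin M, b t S ≠ 0)).card : ℝ)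
        ≤ (8 * M + 1 : ℕ) := by exact_mod_cast hcard
      _ = 384 * (L:ℝ) + 1 := by rw [hMdef]; push_cast; ring
      _ ≤ 385 * (L:ℝ) := by
          have : (1:ℝ) ≤ L := by exact_mod_cast hL
          linarith
      _ ≤ 385 * (Real.log n / Real.log 2) := by nlinarith [hlog]
      _ = 385 * Real.log n / Real.log 2 := by ring
      _ ≤ 1000 * Real.log n := by
          rw [div_le_iff₀ (by linarith : (0:ℝ) < Real.log 2)]
          nlinarith
  · -- approximation
    intro x
    have hml : mlEval (fun T => (M:ℝ)⁻¹ * ∑ t : Fin M, b t T) x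
        = (M:ℝ)⁻¹ * ∑ t : Fin M,
            ((∑ v : Bool × Bool × Bool, ∏ i ∈ U t v, (if x i then (1:ℝ) else 0))
              - 7 * ∏ i ∈ (Finset.univ : Finset (Fin n)), (if x i then (1:ℝ) else 0)) := by
      unfold mlEval
      simp only [mul_assoc]
      rw [← Finset.mul_sum]
      congr 1
      simp only [Finset.sum_mul]
      rw [Finset.sum_comm]
      refine Finset.sum_congr rfl fun t _ => ?_
      rw [hb]
      simp only [sub_mul, Finset.sum_sub_distrib, Finset.sum_mul, ite_mul, one_mul, zero_mul]
      congr 1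
      · rw [Finset.sum_comm]
        refine Finset.sum_congr rfl fun v _ => ?_
        rw [Finset.sum_ite_eq]
        simp
      · rw [Finset.sum_ite_eq']
        simp [mul_comm]
    have hEv : ∀ t : Fin M,
        ((∑ v : Bool × Bool × Bool, ∏ i ∈ U t v, (if x i then (1:ℝ) else 0))
          - 7 * ∏ i ∈ (Finset.univ : Finset (Fin n)), (if x i then (1:ℝ) else 0))
        = if (∀ i j : Fin n, x i = false → x j = false → g t i = g t j) then 1 else 0 := by
      intro t
      by_cases hall : ∀ i, x i = true
      · have h1 : ∀ v : Bool × Bool × Bool,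
            (∏ i ∈ U t v, (if x i then (1:ℝ) else 0)) = 1 := by
          intro v; rw [mono_eq]; exact if_pos fun i _ => hall i
        have h2 : (∏ i ∈ (Finset.univ : Finset (Fin n)), (if x i then (1:ℝ) else 0)) = 1 := by
          rw [mono_eq]; exact if_pos fun i _ => hall i
        have h3 : ∀ i j : Fin n, x i = false → x j = false → g t i = g t j := by
          intro i j hi _
          rw [hall i] at hi; cases hi
        rw [Finset.sum_congr rfl fun v _ => h1 v, h2, Finset.sum_const, if_pos h3]
        simp
        norm_num
      · push_neg at hall
        obtain ⟨i0, hi0⟩ := hall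
        have hi0' : x i0 = false := by simpa using hi0
        have h2 : (∏ i ∈ (Finset.univ : Finset (Fin n)), (if x i then (1:ℝ) else 0)) = 0 := by
          rw [mono_eq, if_neg]
          intro h; exact hi0 (h i0 (Finset.mem_univ _))
        by_cases hP : ∀ i j : Fin n, x i = false → x j = false → g t i = g t j
        · have hone : (∏ i ∈ U t (g t i0), (if x i then (1:ℝ) else 0)) = 1 := by
            rw [mono_eq, if_pos]
            intro i hiU
            rw [hU] at hiU
            simp only [Finset.mem_filter] at hiU
            by_contra hxi
            have hxi' : x i = false := by simpa using hxi
            exact hiU.2 (hP i i0 hxi' hi0')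
          have hzero : ∀ v : Bool × Bool × Bool, v ≠ g t i0 →
              (∏ i ∈ U t v, (if x i then (1:ℝ) else 0)) = 0 := by
            intro v hv
            rw [mono_eq, if_neg]
            intro h
            have hmem : i0 ∈ U t v := by
              rw [hU]; simp only [Finset.mem_filter]
              exact ⟨Finset.mem_univ _, fun e => hv e.symm⟩
            exact hi0 (h i0 hmem)
          rw [Finset.sum_eq_single (g t i0) (fun v _ hv => hzero v hv)
            (fun h => absurd (Finset.mem_univ _) h), hone, h2, if_pos hP]
          ring
        · have hzero : ∀ v ∈ (Finset.univ : Finset (Bool × Bool × Bool)),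
              (∏ i ∈ U t v, (if x i then (1:ℝ) else 0)) = 0 := by
            intro v _
            push_neg at hP
            obtain ⟨i, j, hxi, hxj, hne⟩ := hP
            rw [mono_eq, if_neg]
            intro h
            by_cases hgv : g t i = v
            · have hmem : j ∈ U t v := by
                rw [hU]; simp only [Finset.mem_filter]
                refine ⟨Finset.mem_univ _, fun e => hne ?_⟩
                rw [hgv, e]
              have := h j hmem
              rw [hxj] at this; cases this
            · have hmem : i ∈ U t v := by
                rw [hU]; simp only [Finset.mem_filter]; exact ⟨Finset.mem_univ _, hgv⟩
              have := h i hmem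
              rw [hxi] at this; cases this
          rw [Finset.sum_eq_zero hzero, h2, if_neg hP]
          ring
    set Z := (Finset.univ : Finset (Fin n)).filter (fun i => ¬ x i = true) with hZdef
    have hcards : ((Finset.univ : Finset (Fin n)).filter (fun i => x i = true)).card + Z.card
        = n := by
      rw [hZdef, Finset.card_filter_add_card_filter_not, Finset.card_univ,
        Fintype.card_fin]
    by_cases hZ : Z.card ≤ 1
    · have hPall : ∀ t : Fin M, (∀ i j : Fin n, x i = false → x j = false → g t i = g t j) := by
        intro t i j hi hj
        have hi' : i ∈ Z := by rw [hZdef]; simp [hi]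
        have hj' : j ∈ Z := by rw [hZdef]; simp [hj]
        rw [Finset.card_le_one.mp hZ i hi' j hj']
      have hval : mlEval (fun T => (M:ℝ)⁻¹ * ∑ t : Fin M, b t T) x = 1 := by
        rw [hml, Finset.sum_congr rfl fun t _ => by rw [hEv t, if_pos (hPall t)]]
        rw [Finset.sum_const, Finset.card_univ, Fintype.card_fin, nsmul_eq_mul, mul_one]
        rw [inv_mul_cancel₀]
        exact_mod_cast hMpos.ne'
      have hthr : n - 1 ≤ ((Finset.univ : Finset (Fin n)).filter (fun i => x i = true)).card := by
        omega
      rw [hval, if_pos hthr]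
      norm_num
    · push_neg at hZ
      obtain ⟨i, hiZ, j, hjZ, hij⟩ := Finset.one_lt_card.mp hZ
      have hxi : x i = false := by
        rw [hZdef, Finset.mem_filter] at hiZ
        simpa using hiZ.2
      have hxj : x j = false := by
        rw [hZdef, Finset.mem_filter] at hjZ
        simpa using hjZ.2
      have hgij := hg i j hij
      have hFle : ∀ t : Fin M,
          (if (∀ i' j' : Fin n, x i' = false → x j' = false → g t i' = g t j')
            then (1:ℝ) else 0) ≤ (if g t i = g t j then (1:ℝ) else 0) := by
        intro t
        by_cases hP : ∀ i' j' : Fin n, x i' = false → x j' = false → g t i' = g t j'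
        · rw [if_pos hP, if_pos (hP i j hxi hxj)]
        · rw [if_neg hP]; positivity
      have hsum_nonneg : (0:ℝ) ≤ ∑ t : Fin M,
          (if (∀ i' j' : Fin n, x i' = false → x j' = false → g t i' = g t j')
            then (1:ℝ) else 0) :=
        Finset.sum_nonneg fun t _ => by positivity
      have hsum_le : (∑ t : Fin M,
          (if (∀ i' j' : Fin n, x i' = false → x j' = false → g t i' = g t j')
            then (1:ℝ) else 0))
          ≤ ((Finset.univ.filter fun t : Fin M => g t i = g t j).card : ℝ) := by
        calc (∑ t : Fin M,
            (if (∀ i' j' : Fin n, x i' = false → x j' = false → g t i' = g t j')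
              then (1:ℝ) else 0))
            ≤ ∑ t : Fin M, (if g t i = g t j then (1:ℝ) else 0) :=
              Finset.sum_le_sum fun t _ => hFle t
          _ = ((Finset.univ.filter fun t : Fin M => g t i = g t j).card : ℝ) := by
              rw [Finset.sum_boole]
      have hthr' : ¬ (n - 1
          ≤ ((Finset.univ : Finset (Fin n)).filter (fun i => x i = true)).card) := by
        omega
      have hMR : (0:ℝ) < (M:ℝ) := by exact_mod_cast hMpos
      have hcast : (3:ℝ) * ((Finset.univ.filter fun t : Fin M => g t i = g t j).card : ℝ)
          ≤ (M:ℝ) := by exact_mod_cast hgij.le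
      rw [hml, Finset.sum_congr rfl fun t _ => hEv t, if_neg hthr', sub_zero,
        abs_of_nonneg (mul_nonneg (inv_nonneg.mpr hMR.le) hsum_nonneg)]
      calc (M:ℝ)⁻¹ * ∑ t : Fin M,
          (if (∀ i' j' : Fin n, x i' = false → x j' = false → g t i' = g t j')
            then (1:ℝ) else 0)
          ≤ (M:ℝ)⁻¹ * ((Finset.univ.filter fun t : Fin M => g t i = g t j).card : ℝ) := by
            exact mul_le_mul_of_nonneg_left hsum_le (inv_nonneg.mpr hMR.le)
        _ ≤ 1 / 3 := by
            rw [inv_mul_le_iff₀ hMR]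
            linarith
end

section
/- Let f : {0,1}^n → {0,1} have monotone block sensitivity MBS(f) = k. Then the 1/3-approximate sparsity of f satisfies log asparsity(f) = Ω(√k); equivalently, MBS(f) = O((log asparsity(f))²). -/
/-
Restricting `f` to its `k` sensitive blocks (each block becomes one variable, all other
coordinates stay frozen at `x`) gives a function on `{0,1}^k` that changes its value when any
single variable is raised from `0`, and its approximating polynomials are no sparser than those
of `f`. Let `s` be the sparsity and `d = ⌊log₂ s⌋ + 1`, so that `s < 2^d`. A union bound gives
a set `L` of at least `k/2` variables containing no monomial of degree `> d`; zeroing the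
variables outside `L` leaves a polynomial of degree `≤ d`. Symmetrizing it over `L`
(Minsky–Papert) gives a univariate polynomial `Q` of degree `≤ d` with `|Q t| ≤ 4/3` for
`t = 0, …, |L|` and `|Q 1 - Q 0| ≥ 1/3`. Lagrange interpolation of `(Q - Q 0)/X` at the nodes
`j² q` (`1 ≤ j ≤ d`) shows `q |Q 1 - Q 0| ≤ 8 · 4/3` whenever `q d² ≤ |L|`, so `|L| < 33 d²`
and `k ≤ 66 d² = O((log s)²)`.
-/

open Finset Classical

/-- A Boolean function viewed as a real-valued function. -/
noncomputable def toRealFn {n : ℕ} (f : (Fin n → Bool) → Bool) : (Fin n → Bool) → ℝ :=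
  fun x => if f x then 1 else 0

/-- The `1/3`-approximate sparsity of a Boolean function `f`. -/
noncomputable def asparsity {n : ℕ} (f : (Fin n → Bool) → Bool) : ℕ :=
  sInf {s : ℕ | ∃ a : Finset (Fin n) → ℝ,
    (∀ x, |mlEval a x - toRealFn f x| ≤ 1 / 3) ∧
    ((Finset.univ : Finset (Finset (Fin n))).filter (fun S => a S ≠ 0)).card ≤ s}

/-- Flip the coordinates in `B` of `x` from 0 to 1. -/
def flipUp {n : ℕ} (x : Fin n → Bool) (B : Finset (Fin n)) : Fin n → Bool :=
  fun i => if i ∈ B then true else x i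

section Multilinear

variable {n : ℕ}

def charVec (W : Finset (Fin n)) : Fin n → Bool := fun i => decide (i ∈ W)

noncomputable def sparsity (a : Finset (Fin n) → ℝ) : ℕ := #{S | a S ≠ 0}

lemma mlEval_eq_sum_ite (a : Finset (Fin n) → ℝ) (x : Fin n → Bool) :
    mlEval a x = ∑ S, if ∀ i ∈ S, x i then a S else 0 := by
  simp only [mlEval, prod_boole, mul_ite, mul_one, mul_zero]

lemma mlEval_charVec (a : Finset (Fin n) → ℝ) (W : Finset (Fin n)) :
    mlEval a (charVec W) = ∑ U ∈ W.powerset, a U := by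
  rw [mlEval_eq_sum_ite, ← sum_filter]
  congr 1
  ext U
  simp [charVec, subset_iff]

-- Expand `∏ i, (β i * x i + α i)`, whose `i`-th factor is `x i` or `1 - x i` according to `z i`.
lemma exists_mlEval_eq_ite_eq (z : Fin n → Bool) :
    ∃ a : Finset (Fin n) → ℝ, ∀ x, mlEval a x = if x = z then 1 else 0 := by
  let α : Fin n → ℝ := fun i => if z i then 0 else 1
  let β : Fin n → ℝ := fun i => if z i then 1 else -1
  refine ⟨fun T => (∏ i ∈ T, β i) * ∏ i ∈ univ \ T, α i, fun x => ?_⟩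
  have hfactor : ∀ i, β i * (if x i then 1 else 0) + α i = if x i = z i then 1 else 0 := by
    intro i
    simp only [α, β]
    cases x i <;> cases z i <;> norm_num
  calc mlEval _ x
      = ∑ T ∈ univ.powerset,
          (∏ i ∈ T, β i * (if x i then 1 else 0)) * ∏ i ∈ univ \ T, α i := by
        simp only [mlEval, powerset_univ, prod_mul_distrib]
        exact sum_congr rfl fun T _ => by ring
    _ = ∏ i, (if x i = z i then 1 else 0) := by simp only [← prod_add, hfactor]
    _ = if x = z then 1 else 0 := by simp only [prod_boole, mem_univ, true_implies, funext_iff]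

lemma exists_mlEval_eq (g : (Fin n → Bool) → ℝ) :
    ∃ a : Finset (Fin n) → ℝ, ∀ x, mlEval a x = g x := by
  choose e he using exists_mlEval_eq_ite_eq (n := n)
  refine ⟨fun S => ∑ z, g z * e z S, fun x => ?_⟩
  have hlin : mlEval (fun S => ∑ z, g z * e z S) x = ∑ z, g z * mlEval (e z) x := by
    simp only [mlEval, sum_mul, mul_sum, mul_assoc]
    exact sum_comm
  simp [hlin, he]

lemma exists_approx_sparsity_le_asparsity (f : (Fin n → Bool) → Bool) :
    ∃ a : Finset (Fin n) → ℝ, (∀ x, |mlEval a x - toRealFn f x| ≤ 1 / 3) ∧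
      sparsity a ≤ asparsity f := by
  obtain ⟨a, ha⟩ := exists_mlEval_eq (toRealFn f)
  exact Nat.sInf_mem (s := {s | ∃ a : Finset (Fin n) → ℝ,
    (∀ x, |mlEval a x - toRealFn f x| ≤ 1 / 3) ∧ sparsity a ≤ s})
    ⟨sparsity a, a, fun x => by simp [ha], le_rfl⟩

end Multilinear

section Substitution

variable {n k : ℕ}

def substVars (σ : Fin n → Option (Fin k)) (c : Fin n → Bool) (y : Fin k → Bool) :
    Fin n → Bool :=
  fun i => (σ i).elim (c i) y

lemma forall_mem_substVars_iff (σ : Fin n → Option (Fin k)) (c : Fin n → Bool)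
    (y : Fin k → Bool) (S : Finset (Fin n)) :
    (∀ i ∈ S, substVars σ c y i) ↔
      (∀ i ∈ S, σ i = none → c i) ∧ ∀ j ∈ (S.image σ).eraseNone, y j := by
  simp only [mem_eraseNone, mem_image]
  constructor
  · intro h
    refine ⟨fun i hi hσ => by simpa [substVars, hσ] using h i hi, ?_⟩
    rintro j ⟨i, hi, hσ⟩
    simpa [substVars, hσ] using h i hi
  · rintro ⟨hc, hy⟩ i hi
    cases hσ : σ i with
    | none => simpa [substVars, hσ] using hc i hi hσ
    | some j => simpa [substVars, hσ] using hy j ⟨i, hi, hσ⟩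

-- The monomial on `S` becomes `∏ i ∈ S with σ i = none, c i` times the monomial on the image of
-- `S` under `σ`, because Boolean variables are idempotent.
lemma exists_sparsity_le_mlEval_substVars (σ : Fin n → Option (Fin k)) (c : Fin n → Bool)
    (a : Finset (Fin n) → ℝ) :
    ∃ a' : Finset (Fin k) → ℝ, sparsity a' ≤ sparsity a ∧
      ∀ y, mlEval a' y = mlEval a (substVars σ c y) := by
  let β : Finset (Fin n) → Finset (Fin k) := fun S => (S.image σ).eraseNone
  let b : Finset (Fin n) → ℝ := fun S => if ∀ i ∈ S, σ i = none → c i then a S else 0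
  refine ⟨fun U => ∑ S with β S = U, b S, ?_, fun y => ?_⟩
  · have hsupp : ({U | ∑ S with β S = U, b S ≠ 0} : Finset (Finset (Fin k))) ⊆
        image β {S | a S ≠ 0} := by
      intro U hU
      obtain ⟨S, hS, hbS⟩ := exists_ne_zero_of_sum_ne_zero (mem_filter.mp hU).2
      refine mem_image.mpr
        ⟨S, mem_filter.mpr ⟨mem_univ _, fun ha => hbS ?_⟩, (mem_filter.mp hS).2⟩
      simp [b, ha]
    exact (card_le_card hsupp).trans card_image_le
  · have hterm : ∀ S, b S * ∏ j ∈ β S, (if y j then (1 : ℝ) else 0) =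
        a S * ∏ i ∈ S, (if substVars σ c y i then (1 : ℝ) else 0) := by
      intro S
      simp only [b, prod_boole, forall_mem_substVars_iff, β, ite_and]
      split_ifs <;> simp
    calc mlEval _ y
        = ∑ U, ∑ S with β S = U, b S * ∏ j ∈ β S, (if y j then (1 : ℝ) else 0) := by
          refine sum_congr rfl fun U _ => ?_
          rw [sum_mul]
          exact sum_congr rfl fun S hS => by rw [(mem_filter.mp hS).2]
      _ = mlEval a (substVars σ c y) := by
          rw [sum_fiberwise]
          exact sum_congr rfl fun S _ => hterm S

noncomputable def blockIndex (B : Fin k → Finset (Fin n)) (i : Fin n) : Option (Fin k) :=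
  if h : ∃ j, i ∈ B j then some h.choose else none

lemma substVars_blockIndex_charVec {x : Fin n → Bool} {B : Fin k → Finset (Fin n)}
    (hx : ∀ j, ∀ i ∈ B j, x i = false) (hdisj : Pairwise fun j j' => Disjoint (B j) (B j'))
    (W : Finset (Fin k)) :
    substVars (blockIndex B) x (charVec W) = flipUp x (W.biUnion B) := by
  funext i
  by_cases h : ∃ j, i ∈ B j
  · have hσ : blockIndex B i = some h.choose := dif_pos h
    have hj := h.choose_spec
    generalize h.choose = j₀ at hσ hj
    have hmem : i ∈ W.biUnion B ↔ j₀ ∈ W := by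
      refine ⟨fun hi => ?_, fun hW => mem_biUnion.mpr ⟨j₀, hW, hj⟩⟩
      obtain ⟨j, hjW, hij⟩ := mem_biUnion.mp hi
      obtain rfl : j = j₀ := by_contra fun hne => disjoint_left.mp (hdisj hne) hij hj
      exact hjW
    by_cases hW : j₀ ∈ W <;> simp [substVars, hσ, flipUp, hmem, charVec, hW, hx j₀ i hj]
  · simp_all [substVars, blockIndex, flipUp]

end Substitution

section Counting

variable {k : ℕ}

lemma card_filter_superset (U : Finset (Fin k)) : #{L | U ⊆ L} = 2 ^ (k - #U) := by
  have hset : ({L | U ⊆ L} : Finset (Finset (Fin k))) = Uᶜ.powerset.image compl := by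
    ext L
    simp
  rw [hset, card_image_of_injective _ compl_injective, card_powerset, card_compl, Fintype.card_fin]

-- Fewer than `2 ^ (k - 1)` sets contain a member of `𝒰`, while `L` or `Lᶜ` always has at least
-- `k / 2` elements.
lemma exists_half_not_superset {d : ℕ} (𝒰 : Finset (Finset (Fin k))) (h𝒰 : #𝒰 < 2 ^ d)
    (hbig : ∀ U ∈ 𝒰, d < #U) :
    ∃ L : Finset (Fin k), k ≤ 2 * #L ∧ ∀ U ∈ 𝒰, ¬U ⊆ L := by
  let bad := 𝒰.biUnion fun U => ({L | U ⊆ L} : Finset (Finset (Fin k)))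
  have hbad : 2 * #bad < 2 ^ k := by
    have hU : ∀ U ∈ 𝒰, 2 ^ (d + 1) * #{L | U ⊆ L} ≤ 2 ^ k := fun U hU => by
      have hUk : #U ≤ k := by simpa using card_le_univ U
      rw [card_filter_superset, ← pow_add]
      exact Nat.pow_le_pow_right two_pos (by have := hbig U hU; omega)
    refine Nat.lt_of_mul_lt_mul_left (a := 2 ^ d) ?_
    calc 2 ^ d * (2 * #bad) = 2 ^ (d + 1) * #bad := by ring
      _ ≤ ∑ U ∈ 𝒰, 2 ^ (d + 1) * #{L | U ⊆ L} := by
          rw [← mul_sum]; exact Nat.mul_le_mul_left _ card_biUnion_le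
      _ ≤ #𝒰 * 2 ^ k := by simpa using sum_le_sum hU
      _ < 2 ^ d * 2 ^ k := Nat.mul_lt_mul_of_pos_right h𝒰 (by positivity)
  by_contra! hall
  have hmem : ∀ M : Finset (Fin k), k ≤ 2 * #M → M ∈ bad := fun M hM => by
    obtain ⟨U, hU, hUM⟩ := hall M hM
    exact mem_biUnion.mpr ⟨U, hU, by simpa using hUM⟩
  have hcover : (univ : Finset (Finset (Fin k))) ⊆ bad ∪ bad.image compl := by
    intro L _
    by_cases hL : k ≤ 2 * #L
    · exact mem_union_left _ (hmem L hL)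
    · refine mem_union_right _ (mem_image.mpr ⟨Lᶜ, hmem _ ?_, compl_compl L⟩)
      rw [card_compl, Fintype.card_fin]
      omega
  have hcard := (card_le_card hcover).trans
    ((card_union_le _ _).trans (add_le_add_right card_image_le _))
  rw [card_univ, Fintype.card_finset, Fintype.card_fin] at hcard
  omega

end Counting

section Symmetrization

open Polynomial

variable {k : ℕ}

-- `t.descFactorial u / (#L).descFactorial u` is the probability that a random `t`-subset of `L`
-- contains a given `u`-subset, so `symmPoly a L` at `t` averages `a` over the `t`-subsets of `L`.
noncomputable def symmPoly (a : Finset (Fin k) → ℝ) (L : Finset (Fin k)) : ℝ[X] :=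
  ∑ U ∈ L.powerset, C (a U / (#L).descFactorial #U) * descPochhammer ℝ #U

lemma natDegree_symmPoly_le {a : Finset (Fin k) → ℝ} {L : Finset (Fin k)} {d : ℕ}
    (h : ∀ U ⊆ L, a U ≠ 0 → #U ≤ d) : (symmPoly a L).natDegree ≤ d := by
  refine natDegree_sum_le_of_forall_le _ _ fun U hU => ?_
  by_cases h0 : a U = 0
  · simp [h0]
  · exact (natDegree_C_mul_le _ _).trans
      ((descPochhammer_natDegree ℝ _).trans_le (h U (mem_powerset.mp hU) h0))

lemma choose_mul_eval_symmPoly (a : Finset (Fin k) → ℝ) (L : Finset (Fin k)) (t : ℕ) :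
    (#L).choose t * (symmPoly a L).eval (t : ℝ) =
      ∑ W ∈ powersetCard t L, mlEval a (charVec W) := by
  have hrhs : ∑ W ∈ powersetCard t L, mlEval a (charVec W) =
      ∑ U ∈ L.powerset, a U * #{W ∈ powersetCard t L | U ⊆ W} := by
    simp only [mlEval_charVec]
    rw [sum_comm' (t' := L.powerset) (s' := fun U => {W ∈ powersetCard t L | U ⊆ W})]
    · simp [mul_comm]
    · intro W U
      simp only [mem_powerset, mem_filter, mem_powersetCard]
      exact ⟨fun h => ⟨⟨h.1, h.2⟩, h.2.trans h.1.1⟩, fun h => ⟨h.1.1, h.1.2⟩⟩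
  rw [hrhs, symmPoly, eval_finsetSum, mul_sum]
  refine sum_congr rfl fun U hU => ?_
  have hUL := mem_powerset.mp hU
  rw [eval_mul, eval_C, descPochhammer_eval_eq_descFactorial]
  rcases le_or_gt #U t with hut | htu
  · rw [card_filter_powersetCard_subset _ _ _ hUL hut]
    have hcount : (#L).choose t * t.descFactorial #U =
        (#L).descFactorial #U * (#L - #U).choose (t - #U) := by
      rw [Nat.descFactorial_eq_factorial_mul_choose, Nat.descFactorial_eq_factorial_mul_choose,
        mul_left_comm, Nat.choose_mul hut]
      ring
    have hpos : ((#L).descFactorial #U : ℝ) ≠ 0 :=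
      Nat.cast_ne_zero.mpr (Nat.descFactorial_pos.mpr (card_le_card hUL)).ne'
    field_simp
    rw [mul_right_comm, ← Nat.cast_mul, hcount]
    push_cast
    ring
  · have hempty : {W ∈ powersetCard t L | U ⊆ W} = ∅ :=
      filter_false_of_mem fun W hW hUW =>
        ((card_le_card hUW).trans_eq (mem_powersetCard.mp hW).2).not_gt htu
    simp [hempty, Nat.descFactorial_eq_zero_iff_lt.mpr htu]

lemma abs_eval_symmPoly_sub_le {a : Finset (Fin k) → ℝ} {L : Finset (Fin k)} {t : ℕ}
    {c ε : ℝ} (ht : t ≤ #L) (h : ∀ W ∈ powersetCard t L, |mlEval a (charVec W) - c| ≤ ε) :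
    |(symmPoly a L).eval (t : ℝ) - c| ≤ ε := by
  have hN : (0 : ℝ) < (#L).choose t := by exact_mod_cast Nat.choose_pos ht
  refine le_of_mul_le_mul_left ?_ hN
  calc (#L).choose t * |(symmPoly a L).eval (t : ℝ) - c|
      = |∑ W ∈ powersetCard t L, (mlEval a (charVec W) - c)| := by
        rw [sum_sub_distrib, ← choose_mul_eval_symmPoly a L t, sum_const, card_powersetCard,
          nsmul_eq_mul, ← mul_sub, abs_mul, abs_of_pos hN]
    _ ≤ ∑ _W ∈ powersetCard t L, ε := (abs_sum_le_sum_abs _ _).trans (sum_le_sum h)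
    _ = (#L).choose t * ε := by rw [sum_const, card_powersetCard, nsmul_eq_mul]

end Symmetrization

section Univariate

open Polynomial Nat

lemma prod_erase_Ico_abs_sub {i d : ℕ} (hi : 1 ≤ i) (hid : i ≤ d) :
    ∏ j ∈ (Ico 1 (d + 1)).erase i, |(i : ℝ) - j| = (i - 1)! * (d - i)! := by
  have hsplit : (Ico 1 (d + 1)).erase i = Ico 1 i ∪ Ico (i + 1) (d + 1) := by
    ext j; simp only [mem_erase, mem_Ico, mem_union]; omega
  have hdisj : Disjoint (Ico 1 i) (Ico (i + 1) (d + 1)) :=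
    disjoint_left.mpr fun j h1 h2 => by simp only [mem_Ico] at h1 h2; omega
  have hlow : ∏ j ∈ Ico 1 i, |(i : ℝ) - j| = (i - 1)! := by
    rw [prod_Ico_eq_prod_range, ← descFactorial_self, descFactorial_eq_prod_range]
    push_cast
    refine prod_congr rfl fun j hj => ?_
    rw [mem_range] at hj
    rw [show (i : ℝ) = ((1 + j + (i - 1 - j) : ℕ) : ℝ) by congr 1; omega]
    push_cast
    rw [add_sub_cancel_left, abs_of_nonneg (Nat.cast_nonneg _)]
  have hhigh : ∏ j ∈ Ico (i + 1) (d + 1), |(i : ℝ) - j| = (d - i)! := by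
    rw [prod_Ico_eq_prod_range, ← prod_range_add_one_eq_factorial]
    push_cast
    refine prod_congr rfl fun j _ => ?_
    rw [abs_sub_comm, abs_of_nonneg (by linarith)]
    ring
  rw [hsplit, prod_union hdisj, hlow, hhigh]

lemma factorial_mul_prod_Ico_add (i d : ℕ) :
    i ! * ∏ j ∈ Ico 1 (d + 1), (i + j) = (i + d)! := by
  rw [← factorial_mul_ascFactorial, ascFactorial_eq_prod_range, prod_Ico_eq_prod_range,
    Nat.add_sub_cancel]
  congr 1
  exact prod_congr rfl fun j _ => by ring

lemma factorial_mul_factorial_le {i d : ℕ} (hid : i ≤ d) : d ! * d ! ≤ (d - i)! * (d + i)! :=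
  calc d ! * d ! = (d - i)! * (d.descFactorial i * d !) := by
        rw [← mul_assoc, factorial_mul_descFactorial hid]
    _ ≤ (d - i)! * ((d + i).descFactorial i * d !) := by gcongr; omega
    _ = (d - i)! * (d + i)! := by
        have h := factorial_mul_descFactorial (n := d + i) (k := i) (by omega)
        rw [Nat.add_sub_cancel] at h
        rw [mul_comm _ (d !), h]

-- The product equals `2 (d!)² / ((d - i)! (d + i)!)`.
lemma prod_sq_div_abs_sq_sub_sq_le_two {i d : ℕ} (hi : 1 ≤ i) (hid : i ≤ d) :
    ∏ j ∈ (Ico 1 (d + 1)).erase i, (j : ℝ) ^ 2 / |(i : ℝ) ^ 2 - j ^ 2| ≤ 2 := by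
  have hmem : i ∈ Ico 1 (d + 1) := mem_Ico.mpr ⟨hi, by omega⟩
  set E := (Ico 1 (d + 1)).erase i
  set p := ∏ j ∈ E, (j : ℝ)
  set r := ∏ j ∈ E, ((i : ℝ) + j)
  have hp : (i : ℝ) * p = d ! := by
    have h : i * ∏ j ∈ E, j = d ! :=
      (mul_prod_erase _ (fun j => j) hmem).trans (prod_Ico_id_eq_factorial d)
    rw [show p = ((∏ j ∈ E, j : ℕ) : ℝ) from (Nat.cast_prod _ _).symm]
    exact_mod_cast h
  have hr : 2 * i * r * i ! = (i + d)! := by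
    have h : ((i : ℝ) + i) * r = ∏ j ∈ Ico 1 (d + 1), ((i : ℝ) + j) :=
      mul_prod_erase _ (fun j : ℕ => (i : ℝ) + j) hmem
    have h' : (i ! : ℝ) * ∏ j ∈ Ico 1 (d + 1), ((i : ℝ) + j) = (i + d)! := by
      exact_mod_cast factorial_mul_prod_Ico_add i d
    rw [← h', ← h]
    ring
  have hfac : (i ! : ℝ) = i * (i - 1)! := by exact_mod_cast (mul_factorial_pred (by omega)).symm
  have hle : (d ! : ℝ) * d ! ≤ (d - i)! * (d + i)! := by
    exact_mod_cast factorial_mul_factorial_le hid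
  have hsplit : ∏ j ∈ E, (j : ℝ) ^ 2 / |(i : ℝ) ^ 2 - j ^ 2| =
      p ^ 2 / ((i - 1)! * (d - i)! * r) := by
    rw [← prod_erase_Ico_abs_sub hi hid, ← prod_pow, ← prod_mul_distrib, ← prod_div_distrib]
    refine prod_congr rfl fun j _ => ?_
    rw [show (i : ℝ) ^ 2 - j ^ 2 = (i - j) * (i + j) by ring, abs_mul,
      abs_of_pos (a := (i : ℝ) + j) (by positivity)]
  rw [hsplit, div_le_iff₀ (by positivity)]
  have hi0 : (0 : ℝ) < i ^ 2 * i ! := by positivity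
  refine le_of_mul_le_mul_left ?_ hi0
  calc (i : ℝ) ^ 2 * i ! * p ^ 2 = (i * p) ^ 2 * i ! := by ring
    _ = (d ! : ℝ) * d ! * i ! := by rw [hp]; ring
    _ ≤ ((d - i)! : ℝ) * (d + i)! * i ! := by gcongr
    _ = i ^ 2 * i ! * (2 * ((i - 1)! * (d - i)! * r)) := by
        rw [add_comm d i, ← hr, hfac]
        ring

lemma abs_eval_one_basis_le_two {d q i : ℕ} (hq : 1 ≤ q) (hi : i ∈ Ico 1 (d + 1)) :
    |(Lagrange.basis (Ico 1 (d + 1)) (fun j : ℕ => ((j ^ 2 * q : ℕ) : ℝ)) i).eval 1|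
      ≤ 2 := by
  have hq' : (1 : ℝ) ≤ q := by exact_mod_cast hq
  rw [Lagrange.basis, eval_prod, abs_prod]
  refine le_trans (prod_le_prod (fun _ _ => abs_nonneg _) fun j hj => ?_)
    (prod_sq_div_abs_sq_sub_sq_le_two (mem_Ico.mp hi).1 (by have := (mem_Ico.mp hi).2; omega))
  have hj1 : (1 : ℝ) ≤ j := by exact_mod_cast (mem_Ico.mp (mem_of_mem_erase hj)).1
  have hij : (i : ℝ) ^ 2 - j ^ 2 ≠ 0 := fun h => ne_of_mem_erase hj (by
    have : (j : ℝ) = i := by nlinarith [sq_nonneg ((j : ℝ) - i), sq_nonneg ((j : ℝ) + i)]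
    exact_mod_cast this)
  simp only [Lagrange.basisDivisor, eval_mul, eval_C, eval_sub, eval_X, abs_mul, abs_inv]
  push_cast
  have hnum : |1 - (j : ℝ) ^ 2 * q| ≤ (j : ℝ) ^ 2 * q := by
    have := one_le_mul_of_one_le_of_one_le (one_le_pow₀ hj1 (n := 2)) hq'
    rw [abs_of_nonpos (by linarith)]
    linarith
  have hden : |(i : ℝ) ^ 2 * q - j ^ 2 * q| = |(i : ℝ) ^ 2 - j ^ 2| * q := by
    rw [← sub_mul, abs_mul, abs_of_pos (by linarith : (0 : ℝ) < q)]
  rw [hden, inv_mul_eq_div, div_le_div_iff₀ (by positivity) (abs_pos.mpr hij)]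
  nlinarith [abs_nonneg ((i : ℝ) ^ 2 - j ^ 2)]

-- With `R = (Q - Q 0) / X`, `|R v| ≤ 2M / v` at each node `v = j² q`, and the Lagrange weights
-- at `1` have absolute value at most `2`; so `|R 1| ≤ ∑ j, 4M / (q j²) ≤ 8M / q`.
lemma mul_abs_eval_one_sub_eval_zero_le {Q : ℝ[X]} {d q m : ℕ} {M : ℝ}
    (hdeg : Q.natDegree ≤ d) (hqm : q * d ^ 2 ≤ m) (hQ : ∀ t : ℕ, t ≤ m → |Q.eval (t : ℝ)| ≤ M) :
    q * |Q.eval 1 - Q.eval 0| ≤ 8 * M := by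
  have h0 : |Q.eval 0| ≤ M := by simpa using hQ 0 (Nat.zero_le m)
  have hM : 0 ≤ M := (abs_nonneg _).trans h0
  rcases Nat.eq_zero_or_pos q with rfl | hq
  · simp [hM]
  have hR : ∀ t : ℝ, Q.eval t - Q.eval 0 = t * Q.divX.eval t := fun t => by
    conv_lhs => rw [← divX_mul_X_add Q]
    simp [coeff_zero_eq_eval_zero, mul_comm]
  set R := Q.divX
  set s := Ico 1 (d + 1)
  set v : ℕ → ℝ := fun j => ((j ^ 2 * q : ℕ) : ℝ)
  have hv : ∀ j ∈ s, j ^ 2 * q ≤ m := fun j hj =>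
    calc j ^ 2 * q ≤ d ^ 2 * q := by gcongr; exact Nat.lt_succ_iff.mp (mem_Ico.mp hj).2
      _ ≤ m := by rw [mul_comm]; exact hqm
  have hinj : Set.InjOn v s := fun i _ j _ hij => by
    simp only [v, Nat.cast_inj] at hij
    exact Nat.pow_left_injective two_ne_zero (Nat.eq_of_mul_eq_mul_right hq hij)
  have hdegR : R.degree < #s := by
    rw [Nat.card_Ico, Nat.add_sub_cancel]
    rcases eq_or_ne Q 0 with rfl | hQ0
    · simp [R]
    · exact (degree_divX_lt hQ0).trans_le (degree_le_natDegree.trans (by exact_mod_cast hdeg))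
  have hR1 : R.eval 1 = ∑ i ∈ s, R.eval (v i) * (Lagrange.basis s v i).eval 1 := by
    conv_lhs => rw [Lagrange.eq_interpolate hinj hdegR]
    simp [Lagrange.interpolate_apply, eval_finsetSum]
  have hterm : ∀ i ∈ s,
      |R.eval (v i) * (Lagrange.basis s v i).eval 1| ≤ 4 * M / q * ((i : ℝ) ^ 2)⁻¹ := by
    intro i hi
    have hvi : v i = (i : ℝ) ^ 2 * q := by simp [v]
    have hvpos : 0 < v i := by
      have : (1 : ℝ) ≤ i := by exact_mod_cast (mem_Ico.mp hi).1
      rw [hvi]; positivity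
    have hRv : v i * |R.eval (v i)| ≤ 2 * M := by
      rw [show v i * |R.eval (v i)| = |Q.eval (v i) - Q.eval 0| by
        rw [hR, abs_mul, abs_of_pos hvpos]]
      have h1 : |Q.eval (v i)| ≤ M := hQ _ (hv i hi)
      exact (abs_sub _ _).trans (by linarith)
    rw [abs_mul]
    calc |R.eval (v i)| * |(Lagrange.basis s v i).eval 1| ≤ (2 * M / v i) * 2 :=
          mul_le_mul ((le_div_iff₀ hvpos).mpr (by linarith)) (abs_eval_one_basis_le_two hq hi)
            (abs_nonneg _) (by positivity)
      _ = 4 * M / q * ((i : ℝ) ^ 2)⁻¹ := by rw [hvi]; field_simp; ring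
  have hsum : ∑ i ∈ s, ((i : ℝ) ^ 2)⁻¹ ≤ 2 := by
    have := sum_Ioo_inv_sq_le (α := ℝ) 0 (d + 1)
    rw [show s = Ioo 0 (d + 1) by ext; simp [s]; omega]
    simpa using this
  have hq' : (0 : ℝ) < q := by exact_mod_cast hq
  calc (q : ℝ) * |Q.eval 1 - Q.eval 0| = q * |R.eval 1| := by rw [hR, one_mul]
    _ ≤ q * ∑ i ∈ s, 4 * M / q * ((i : ℝ) ^ 2)⁻¹ := by
        rw [hR1]
        gcongr
        exact (abs_sum_le_sum_abs _ _).trans (sum_le_sum hterm)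
    _ = 4 * M * ∑ i ∈ s, ((i : ℝ) ^ 2)⁻¹ := by rw [← mul_sum]; field_simp
    _ ≤ 8 * M := by nlinarith

end Univariate

lemma toRealFn_eq_one_sub {n : ℕ} {g : (Fin n → Bool) → Bool} {y z : Fin n → Bool}
    (h : g y ≠ g z) : toRealFn g y = 1 - toRealFn g z := by
  unfold toRealFn
  cases hy : g y <;> cases hz : g z <;> simp_all

lemma card_le_of_approx_of_sensitive_at_zero {k d : ℕ} (g : (Fin k → Bool) → Bool)
    (a : Finset (Fin k) → ℝ) (ha : ∀ y, |mlEval a y - toRealFn g y| ≤ 1 / 3)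
    (hg : ∀ j, g (charVec {j}) ≠ g (charVec ∅)) (hs : sparsity a < 2 ^ d) :
    k ≤ 66 * d ^ 2 := by
  rcases Nat.eq_zero_or_pos k with rfl | hk
  · exact Nat.zero_le _
  obtain ⟨L, hkL, hL⟩ := exists_half_not_superset {U | a U ≠ 0 ∧ d < #U}
    ((card_le_card fun U hU => mem_filter.mpr ⟨mem_univ U, (mem_filter.mp hU).2.1⟩).trans_lt hs)
    (fun U hU => (mem_filter.mp hU).2.2)
  set Q := symmPoly a L
  have hdeg : Q.natDegree ≤ d := natDegree_symmPoly_le fun U hUL hU => by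
    by_contra! h
    exact hL U (mem_filter.mpr ⟨mem_univ _, hU, h⟩) hUL
  have hbound : ∀ t : ℕ, t ≤ #L → |Q.eval (t : ℝ)| ≤ 4 / 3 := fun t ht => by
    simpa using abs_eval_symmPoly_sub_le (c := 0) (ε := 4 / 3) ht fun W _ => by
      have h := ha (charVec W)
      have hg1 : |toRealFn g (charVec W)| ≤ 1 := by unfold toRealFn; split <;> norm_num
      rw [sub_zero]
      linarith [abs_sub_abs_le_abs_sub (mlEval a (charVec W)) (toRealFn g (charVec W))]
  set b := toRealFn g (charVec ∅)
  have h0 : |Q.eval 0 - b| ≤ 1 / 3 := by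
    simpa using abs_eval_symmPoly_sub_le (t := 0) (ε := 1 / 3) (Nat.zero_le _) fun W hW => by
      rw [powersetCard_zero, mem_singleton] at hW
      rw [hW]
      exact ha _
  have h1 : |Q.eval 1 - (1 - b)| ≤ 1 / 3 := by
    simpa using abs_eval_symmPoly_sub_le (t := 1) (ε := 1 / 3) (by omega) fun W hW => by
      obtain ⟨j, rfl⟩ := card_eq_one.mp (mem_powersetCard.mp hW).2
      rw [← toRealFn_eq_one_sub (hg j)]
      exact ha _
  have hjump : 1 / 3 ≤ |Q.eval 1 - Q.eval 0| := by
    rw [abs_le] at h0 h1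
    rcases (show b = 0 ∨ b = 1 by unfold b toRealFn; split <;> simp) with hb | hb
    · exact le_abs.mpr (Or.inl (by linarith))
    · exact le_abs.mpr (Or.inr (by linarith))
  have hm : #L < 33 * d ^ 2 := by
    by_contra! h
    have := mul_abs_eval_one_sub_eval_zero_le (q := 33) hdeg h hbound
    push_cast at this
    linarith
  omega

lemma log_two_div_nine_mul_sqrt_sub_le {k s : ℕ} (hk : k ≤ 66 * (Nat.log 2 s + 1) ^ 2) :
    Real.log 2 / 9 * √k - Real.log 2 ≤ Real.log s := by
  have hlog2 : 0 < Real.log 2 := Real.log_pos one_lt_two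
  have hsqrt : √(k : ℝ) ≤ 9 * (Nat.log 2 s + 1) :=
    Real.sqrt_le_iff.mpr ⟨by positivity, by norm_cast; nlinarith⟩
  have hlog : (Nat.log 2 s : ℝ) * Real.log 2 ≤ Real.log s := by
    have := Real.natLog_le_logb s 2
    rwa [Real.logb, le_div_iff₀ (by exact_mod_cast hlog2)] at this
  calc Real.log 2 / 9 * √k - Real.log 2
      ≤ Real.log 2 / 9 * (9 * (Nat.log 2 s + 1)) - Real.log 2 := by gcongr
    _ = Nat.log 2 s * Real.log 2 := by ring
    _ ≤ Real.log s := hlog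

/-- If `f` has monotone block sensitivity at least `k` — witnessed by an input `x` and `k`
pairwise disjoint sensitive 0-blocks — then `log asparsity(f) = Ω(√k)`; equivalently,
`MBS(f) = O((log asparsity(f))²)`. -/
theorem stmt13 :
    ∃ c : ℝ, 0 < c ∧ ∃ C : ℝ, 0 ≤ C ∧
      ∀ (n k : ℕ) (f : (Fin n → Bool) → Bool) (x : Fin n → Bool) (B : Fin k → Finset (Fin n)),
        (∀ j, ∀ i ∈ B j, x i = false) →
        (∀ j, f (flipUp x (B j)) ≠ f x) →
        (Pairwise fun j j' => Disjoint (B j) (B j')) →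
        c * Real.sqrt k - C ≤ Real.log (asparsity f) := by
  refine ⟨Real.log 2 / 9, by positivity, Real.log 2, (Real.log_pos one_lt_two).le, ?_⟩
  intro n k f x B hx hf hdisj
  obtain ⟨a, ha, has⟩ := exists_approx_sparsity_le_asparsity f
  obtain ⟨a', ha's, ha'⟩ := exists_sparsity_le_mlEval_substVars (blockIndex B) x a
  refine log_two_div_nine_mul_sqrt_sub_le (card_le_of_approx_of_sensitive_at_zero
    (fun y => f (substVars (blockIndex B) x y)) a' (fun y => by rw [ha']; exact ha _)
    (fun j => ?_) (ha's.trans_lt (has.trans_lt (Nat.lt_pow_succ_log_self one_lt_two _))))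
  have hflip : flipUp x ∅ = x := funext fun i => by simp [flipUp]
  simpa [substVars_blockIndex_charVec hx hdisj, hflip] using hf j
end

section
/- Let F ⊆ {0,1}^n be a separating set with respect to f : {0,1}^n → {0,1} (i.e., for every distinct x,y ∈ F, letting B = S(f,x) ∪ S(f,y) be the union of their sensitive coordinates, x|_B ≠ y|_B). Then for any restriction ρ, the restricted set F|_ρ is separating with respect to the restricted function f|_ρ. -/
/-- The set of sensitive coordinates of `f` at `x`. -/
def sensSet {n : ℕ} (f : (Fin n → Bool) → Bool) (x : Fin n → Bool) : Set (Fin n) :=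
  {i | f (Function.update x i (! x i)) ≠ f x}

/-- `F` is a separating set with respect to `f`: any two distinct members differ on the union
of their sets of sensitive coordinates. -/
def Separating {n : ℕ} (f : (Fin n → Bool) → Bool) (F : Set (Fin n → Bool)) : Prop :=
  ∀ x ∈ F, ∀ y ∈ F, x ≠ y → ∃ i ∈ sensSet f x ∪ sensSet f y, x i ≠ y i

/-- `x` is compatible with the restriction `ρ` (agrees with all set variables). -/
def Compatible {n : ℕ} (ρ : Fin n → Option Bool) (x : Fin n → Bool) : Prop :=
  ∀ i b, ρ i = some b → x i = b

/-- The restricted function `f|_ρ`, presented on full inputs via overriding set variables. -/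
def restrictFn {n : ℕ} (f : (Fin n → Bool) → Bool) (ρ : Fin n → Option Bool) :
    (Fin n → Bool) → Bool :=
  fun x => f (fun i => (ρ i).getD (x i))

/-- Separating sets are closed under restriction: if `F` is separating w.r.t. `f`, then for any
restriction `ρ`, the set of members of `F` compatible with `ρ` (i.e. `F|_ρ`) is separating
w.r.t. `f|_ρ`. -/
theorem stmt15 {n : ℕ} (f : (Fin n → Bool) → Bool) (F : Set (Fin n → Bool))
    (hF : Separating f F) (ρ : Fin n → Option Bool) :
    Separating (restrictFn f ρ) {x | x ∈ F ∧ Compatible ρ x} := by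
  have key : ∀ x, Compatible ρ x → (fun i => (ρ i).getD (x i)) = x := by
    intro x hx
    funext i
    cases h : ρ i with
    | none => rfl
    | some b => exact (hx i b h).symm
  have keyupd : ∀ x, Compatible ρ x → ∀ i, ρ i = none →
      (fun j => (ρ j).getD (Function.update x i (! x i) j)) = Function.update x i (! x i) := by
    intro x hx i hi
    funext j
    by_cases hji : j = i
    · subst hji; simp [hi]
    · cases h : ρ j with
      | none => rfl
      | some b => simp [Function.update_of_ne hji, (hx j b h).symm]
  rintro x ⟨hxF, hxc⟩ y ⟨hyF, hyc⟩ hxy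
  obtain ⟨i, hi, hne⟩ := hF x hxF y hyF hxy
  refine ⟨i, ?_, hne⟩
  have hinone : ρ i = none := by
    cases h : ρ i with
    | none => rfl
    | some b => exact absurd ((hxc i b h).trans (hyc i b h).symm) hne
  cases hi with
  | inl h =>
    left
    show restrictFn f ρ (Function.update x i (! x i)) ≠ restrictFn f ρ x
    unfold restrictFn
    rw [keyupd x hxc i hinone, key x hxc]
    exact h
  | inr h =>
    right
    show restrictFn f ρ (Function.update y i (! y i)) ≠ restrictFn f ρ y
    unfold restrictFn
    rw [keyupd y hyc i hinone, key y hyc]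
    exact h
end
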